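/- arXiv:2111.01962 — 3 statements merged into one kernel-verified Lean document; each statement's English description precedes it below -/
import Mathlib

section
/- Let Θ be a 3×3 phase matrix. Then rank_phase(Θ) < 3 if and only if the origin lies in the relative interior of the convex hull (in ℝ² ≅ ℂ) of the six points sgn(σ)·∏_{i=1}^{3} Θ_{i,σ(i)}, σ ranging over the permutations of {1,2,3} (the six signed monomials of the 3×3 determinant evaluated at Θ). -/
/-!
If `M = (m i j * Θ i j)` with `m i j > 0`, then
`det M = ∑ σ, (∏ i, m i (σ i)) • (sign σ * ∏ i, Θ i (σ i))`, so a singular such `M` exhibits `0`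
as a positive combination of the six signed monomials, i.e. as a point of the relative interior
of their convex hull.

Conversely, suppose `∑ σ, w σ • z σ = 0` with all `w σ > 0`. The permutations of `Fin 3` are
`i ↦ i + k` and `i ↦ k - i`, and every entry of a `3 × 3` matrix lies on exactly one "diagonal"
of each kind, so a positive family of six weights is of the form `σ ↦ ∏ i, m i (σ i)` as soon as
the products of the two triples agree. To reach that balance, note that three vectors in
`ℂ ≅ ℝ²` are linearly dependent: moving a triple of weights along a kernel direction keeps its
contribution to the sum and, by the intermediate value theorem, lowers its product to any
prescribed positive value.
-/

open Set Finset Equiv Module Matrix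

section Convex

variable {ι E : Type*} [Fintype ι] [AddCommGroup E] [Module ℝ E]

theorem convexHull_range_eq_image_stdSimplex (p : ι → E) :
    convexHull ℝ (range p) = Fintype.linearCombination ℝ p '' stdSimplex ℝ ι := by
  classical
  rw [← convexHull_rangle_single_eq_stdSimplex, LinearMap.image_convexHull, ← range_comp]
  congr 1
  ext i
  simp

theorem sum_smul_mem_convexHull_range (p : ι → E) {w : ι → ℝ} (hw : w ∈ stdSimplex ℝ ι) :
    ∑ i, w i • p i ∈ convexHull ℝ (range p) := by
  rw [convexHull_range_eq_image_stdSimplex]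
  exact mem_image_of_mem _ hw

variable [TopologicalSpace E] [IsTopologicalAddGroup E] [ContinuousSMul ℝ E]

theorem exists_pos_add_smul_sub_mem_of_mem_intrinsicInterior {s : Set E} {x y : E}
    (hx : x ∈ intrinsicInterior ℝ s) (hy : y ∈ affineSpan ℝ s) :
    ∃ t : ℝ, 0 < t ∧ x + t • (x - y) ∈ s := by
  obtain ⟨x', hx', rfl⟩ := mem_intrinsicInterior.1 hx
  let γ : ℝ → affineSpan ℝ s := fun t =>
    ⟨t • ((x' : E) -ᵥ y) +ᵥ (x' : E), AffineSubspace.smul_vsub_vadd_mem _ t x'.2 hy x'.2⟩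
  have hγ : Continuous γ := Continuous.subtype_mk (by fun_prop) _
  have hγ0 : γ 0 = x' := by ext; simp [γ]
  have hnhds : ∀ᶠ t in nhds 0, γ t ∈ interior (((↑) : affineSpan ℝ s → E) ⁻¹' s) :=
    hγ.continuousAt.eventually_mem (hγ0 ▸ isOpen_interior.mem_nhds hx')
  obtain ⟨t, ht, ht0⟩ := ((hnhds.filter_mono nhdsWithin_le_nhds).and
    (self_mem_nhdsWithin (s := Ioi (0 : ℝ)))).exists
  exact ⟨t, ht0, by simpa [γ, add_comm] using interior_subset ht⟩

theorem exists_pos_sum_smul_eq_of_mem_intrinsicInterior (p : ι → E) {x : E}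
    (hx : x ∈ intrinsicInterior ℝ (convexHull ℝ (range p))) :
    ∃ w : ι → ℝ, (∀ i, 0 < w i) ∧ ∑ i, w i = 1 ∧ ∑ i, w i • p i = x := by
  have : Nonempty ι := by
    by_contra h
    rw [not_nonempty_iff] at h
    simp [range_eq_empty] at hx
  set n : ℝ := (Fintype.card ι : ℝ)
  have hn : 0 < n := by positivity
  set β := n⁻¹ • ∑ i, p i
  have hβ : β ∈ convexHull ℝ (range p) := by
    simpa [β, smul_sum] using
      sum_smul_mem_convexHull_range p (w := fun _ => n⁻¹) ⟨fun _ => by positivity, by simp [n]⟩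
  -- `x` lies strictly between the barycenter `β` and a point `x + t • (x - β)` of the hull.
  obtain ⟨t, ht, hxt⟩ :=
    exists_pos_add_smul_sub_mem_of_mem_intrinsicInterior hx (subset_affineSpan ℝ _ hβ)
  rw [convexHull_range_eq_image_stdSimplex] at hxt
  obtain ⟨ν, ⟨hν0, hν1⟩, hν⟩ := hxt
  refine ⟨fun i => (1 + t)⁻¹ * (ν i + t * n⁻¹), fun i => by have := hν0 i; positivity, ?_, ?_⟩
  · rw [← mul_sum, sum_add_distrib, hν1, sum_const, card_univ, nsmul_eq_mul]
    field_simp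
    ring
  · rw [Fintype.linearCombination_apply] at hν
    simp only [mul_smul, add_smul, ← smul_sum, sum_add_distrib, hν]
    change (1 + t)⁻¹ • (x + t • (x - β) + t • β) = x
    rw [show x + t • (x - β) + t • β = (1 + t) • x by module, inv_smul_smul₀ (by positivity)]

variable [T2Space E]

theorem sum_smul_mem_intrinsicInterior_convexHull_range (p : ι → E) {w : ι → ℝ}
    (hw : ∀ i, 0 < w i) (hw1 : ∑ i, w i = 1) :
    ∑ i, w i • p i ∈ intrinsicInterior ℝ (convexHull ℝ (range p)) := by
  -- Recording the total weight identifies the affine span with a slice of `range G`, in which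
  -- the image of the open positive orthant is open.
  let G := Fintype.linearCombination ℝ fun i => (p i, (1 : ℝ))
  have hG : ∀ μ, G μ = (∑ i, μ i • p i, ∑ i, μ i) := fun μ => by
    ext <;> simp [G, Fintype.linearCombination_apply, Prod.fst_sum, Prod.snd_sum]
  have hspan : ∀ y ∈ affineSpan ℝ (convexHull ℝ (range p)), (y, (1 : ℝ)) ∈ LinearMap.range G := by
    intro y hy
    rw [affineSpan_convexHull] at hy
    obtain ⟨μ, hμ, rfl⟩ := eq_affineCombination_of_mem_affineSpan_of_fintype hy
    exact ⟨μ, by rw [hG, hμ, Finset.affineCombination_eq_linear_combination _ _ _ hμ]⟩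
  let φ : affineSpan ℝ (convexHull ℝ (range p)) → LinearMap.range G :=
    fun y => ⟨(y, 1), hspan y y.2⟩
  have hφ : Continuous φ := Continuous.subtype_mk (by fun_prop) _
  have hopen : IsOpen (G.rangeRestrict '' univ.pi fun _ => Ioi 0) :=
    G.rangeRestrict.isOpenMap_of_finiteDimensional G.surjective_rangeRestrict _
      (isOpen_set_pi finite_univ fun _ _ => isOpen_Ioi)
  have hxs := sum_smul_mem_convexHull_range p ⟨fun i => (hw i).le, hw1⟩
  refine mem_intrinsicInterior.2 ⟨⟨_, subset_affineSpan ℝ _ hxs⟩,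
    mem_interior.2 ⟨φ ⁻¹' _, ?_, hopen.preimage hφ, w, fun i _ => hw i, ?_⟩, rfl⟩
  · rintro y ⟨μ, hμ, hμy⟩
    have hGμ : G μ = ((y : E), 1) := congrArg Subtype.val hμy
    rw [hG, Prod.mk.injEq] at hGμ
    show (y : E) ∈ convexHull ℝ (range p)
    exact hGμ.1 ▸ sum_smul_mem_convexHull_range p ⟨fun i => (hμ i trivial).le, hGμ.2⟩
  · exact Subtype.ext (by simp [φ, hG, hw1])

theorem mem_intrinsicInterior_convexHull_range_iff (p : ι → E) {x : E} :
    x ∈ intrinsicInterior ℝ (convexHull ℝ (range p)) ↔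
      ∃ w : ι → ℝ, (∀ i, 0 < w i) ∧ ∑ i, w i = 1 ∧ ∑ i, w i • p i = x :=
  ⟨exists_pos_sum_smul_eq_of_mem_intrinsicInterior p, fun ⟨_, hw, hw1, hx⟩ =>
    hx ▸ sum_smul_mem_intrinsicInterior_convexHull_range p hw hw1⟩

theorem zero_mem_intrinsicInterior_convexHull_range_iff [Nonempty ι] (p : ι → E) :
    0 ∈ intrinsicInterior ℝ (convexHull ℝ (range p)) ↔
      ∃ w : ι → ℝ, (∀ i, 0 < w i) ∧ ∑ i, w i • p i = 0 := by
  rw [mem_intrinsicInterior_convexHull_range_iff]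
  refine ⟨fun ⟨w, hw, _, h⟩ => ⟨w, hw, h⟩, fun ⟨w, hw, h⟩ => ?_⟩
  have hS : 0 < ∑ i, w i := sum_pos (fun i _ => hw i) univ_nonempty
  exact ⟨fun i => (∑ j, w j)⁻¹ * w i, fun i => mul_pos (inv_pos.2 hS) (hw i),
    by rw [← mul_sum, inv_mul_cancel₀ hS.ne'], by simp [mul_smul, ← smul_sum, h]⟩

end Convex

theorem exists_pos_exit_time {ι : Type*} [Fintype ι] {x δ : ι → ℝ} (hx : ∀ i, 0 < x i)
    (hδ : ∃ i, δ i < 0) :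
    ∃ T > 0, (∀ t ∈ Set.Icc 0 T, ∀ i, 0 ≤ x i + t * δ i) ∧ ∃ j, x j + T * δ j = 0 := by
  classical
  obtain ⟨i₀, hi₀⟩ := hδ
  obtain ⟨j, hj, hmin⟩ := (univ.filter (δ · < 0)).exists_min_image (fun i => x i / -δ i)
    ⟨i₀, by simpa using hi₀⟩
  simp only [mem_filter, Finset.mem_univ, true_and] at hj hmin
  refine ⟨x j / -δ j, div_pos (hx j) (neg_pos.2 hj), fun t ⟨ht0, htT⟩ i => ?_, j, ?_⟩
  · rcases lt_or_ge (δ i) 0 with hi | hi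
    · have := (le_div_iff₀ (neg_pos.2 hi)).1 (htT.trans (hmin i hi))
      linarith
    · nlinarith [hx i]
  · field_simp [hj.ne]
    ring

theorem exists_pos_prod_eq_of_sum_smul_eq {ι E : Type*} [Fintype ι] [AddCommGroup E]
    [Module ℝ E] [FiniteDimensional ℝ E] (z : ι → E) (hcard : finrank ℝ E < Fintype.card ι)
    {x : ι → ℝ} (hx : ∀ i, 0 < x i) {v : ℝ} (hv : 0 < v) (hvx : v ≤ ∏ i, x i) :
    ∃ y : ι → ℝ, (∀ i, 0 < y i) ∧ ∏ i, y i = v ∧ ∑ i, y i • z i = ∑ i, x i • z i := by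
  obtain ⟨δ, hδz, hδ⟩ : ∃ δ : ι → ℝ, ∑ i, δ i • z i = 0 ∧ ∃ i, δ i < 0 := by
    obtain ⟨g, hg, i, hi⟩ := Fintype.not_linearIndependent_iff.1
      fun h => hcard.not_ge h.fintype_card_le_finrank
    rcases hi.lt_or_gt with hi | hi
    · exact ⟨g, hg, i, hi⟩
    · exact ⟨-g, by simp [neg_smul, hg], i, by simpa using hi⟩
  obtain ⟨T, hT, hnonneg, j, hj⟩ := exists_pos_exit_time hx hδ
  let f : ℝ → ℝ := fun t => ∏ i, (x i + t * δ i)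
  have hfT : f T = 0 := prod_eq_zero (Finset.mem_univ j) hj
  obtain ⟨t, ht, hft⟩ : ∃ t ∈ Set.Icc 0 T, f t = v :=
    intermediate_value_Icc' hT.le (by fun_prop : Continuous f).continuousOn
      ⟨hfT ▸ hv.le, by simpa [f] using hvx⟩
  refine ⟨fun i => x i + t * δ i, fun i => (hnonneg t ht i).lt_of_ne ?_, hft, ?_⟩
  · exact fun h => hv.ne' (hft ▸ prod_eq_zero (Finset.mem_univ i) h.symm)
  · simp [add_smul, mul_smul, sum_add_distrib, ← smul_sum, hδz]

theorem Equiv.Perm.sum_fin_three {M : Type*} [AddCommMonoid M] (f : Perm (Fin 3) → M) :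
    ∑ σ, f σ = ∑ k, f (Equiv.addRight k) + ∑ k, f (Equiv.subLeft k) :=
  (Fintype.sum_bijective (Sum.elim Equiv.addRight Equiv.subLeft) (by decide) _ f
    fun _ => rfl).symm.trans (Fintype.sum_sum_type _)

theorem exists_pos_matrix_prod_diagonals_eq {a b : Fin 3 → ℝ} (ha : ∀ k, 0 < a k)
    (hb : ∀ k, 0 < b k) (hab : ∏ k, a k = ∏ k, b k) :
    ∃ m : Matrix (Fin 3) (Fin 3) ℝ, (∀ i j, 0 < m i j) ∧
      ∀ k, ∏ i, m i (i + k) = a k ∧ ∏ i, m i (k - i) = b k := by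
  have := ha 0; have := ha 1; have := ha 2; have := hb 0; have := hb 1; have := hb 2
  -- With four entries normalised to `1`, five of the six equations determine the other five
  -- entries, and the sixth is `hab`.
  refine ⟨!![1, a 1, b 2; a 2 / (b 0 * b 2), 1, 1; 1, b 0, a 0], ?_, ?_⟩
  · intro i j
    fin_cases i <;> fin_cases j <;> simp <;> positivity
  · simp only [Fin.prod_univ_three] at hab
    intro k
    fin_cases k <;> simp [Fin.prod_univ_three] <;> field_simp
    linarith

theorem exists_pos_matrix_sum_prod_smul_eq_zero {E : Type*} [AddCommGroup E] [Module ℝ E]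
    [FiniteDimensional ℝ E] (hE : finrank ℝ E < 3) (z : Perm (Fin 3) → E)
    {w : Perm (Fin 3) → ℝ} (hw : ∀ σ, 0 < w σ) (hwz : ∑ σ, w σ • z σ = 0) :
    ∃ m : Matrix (Fin 3) (Fin 3) ℝ, (∀ i j, 0 < m i j) ∧ ∑ σ, (∏ i, m i (σ i)) • z σ = 0 := by
  rw [Perm.sum_fin_three] at hwz
  have hcard : finrank ℝ E < Fintype.card (Fin 3) := by simpa using hE
  set v := min (∏ k, w (Equiv.addRight k)) (∏ k, w (Equiv.subLeft k))
  have hv : 0 < v := lt_min (prod_pos fun _ _ => hw _) (prod_pos fun _ _ => hw _)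
  obtain ⟨a, ha, hav, haz⟩ := exists_pos_prod_eq_of_sum_smul_eq (z ∘ Equiv.addRight) hcard
    (fun _ => hw _) hv (min_le_left _ _)
  obtain ⟨b, hb, hbv, hbz⟩ := exists_pos_prod_eq_of_sum_smul_eq (z ∘ Equiv.subLeft) hcard
    (fun _ => hw _) hv (min_le_right _ _)
  obtain ⟨m, hm, hmab⟩ := exists_pos_matrix_prod_diagonals_eq ha hb (hav.trans hbv.symm)
  refine ⟨m, hm, ?_⟩
  simp only [Function.comp_apply] at haz hbz
  simp only [Perm.sum_fin_three, coe_addRight, subLeft_apply, (hmab _).1, (hmab _).2, haz, hbz,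
    hwz]

theorem Matrix.det_hadamard_eq_sum {n R : Type*} [Fintype n] [DecidableEq n] [CommRing R]
    (A B : Matrix n n R) :
    (A ⊙ B).det = ∑ σ : Perm n, (∏ i, A i (σ i)) * ((Perm.sign σ : ℤ) * ∏ i, B i (σ i)) := by
  rw [← det_transpose, det_apply]
  refine sum_congr rfl fun σ _ => ?_
  simp only [transpose_apply, hadamard_apply, prod_mul_distrib, Units.smul_def, zsmul_eq_mul]
  ring

theorem Matrix.rank_lt_card_iff_det_eq_zero {n K : Type*} [Fintype n] [DecidableEq n] [Field K]
    {A : Matrix n n K} : A.rank < Fintype.card n ↔ A.det = 0 := by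
  refine ⟨fun h => by_contra fun hA => h.ne (rank_of_det_ne_zero hA), fun h => ?_⟩
  have hA : ¬ Function.Surjective A.mulVec := by
    rwa [mulVec_surjective_iff_isUnit, isUnit_iff_isUnit_det, isUnit_iff_ne_zero, not_not]
  rw [rank, ← Module.finrank_fintype_fun_eq_card K]
  exact Submodule.finrank_lt fun h => hA (LinearMap.range_eq_top.1 h)

theorem Complex.div_norm_eq_iff_exists_pos {z θ : ℂ} (hθ : ‖θ‖ = 1) :
    (z ≠ 0 ∧ z / ‖z‖ = θ) ↔ ∃ r : ℝ, 0 < r ∧ z = r * θ := by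
  constructor
  · rintro ⟨hz, rfl⟩
    have : (‖z‖ : ℂ) ≠ 0 := ofReal_ne_zero.2 (norm_ne_zero_iff.2 hz)
    exact ⟨‖z‖, norm_pos_iff.2 hz, by field_simp⟩
  · rintro ⟨r, hr, rfl⟩
    have hθ0 : θ ≠ 0 := norm_ne_zero_iff.1 (by simp [hθ])
    refine ⟨mul_ne_zero (ofReal_ne_zero.2 hr.ne') hθ0, ?_⟩
    rw [norm_mul, hθ, mul_one, norm_real, Real.norm_of_nonneg hr.le]
    field_simp [ofReal_ne_zero.2 hr.ne']

noncomputable def phaseRank {n m : ℕ} (Θ : Matrix (Fin n) (Fin m) ℂ) : ℕ :=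
  sInf {r | ∃ M : Matrix (Fin n) (Fin m) ℂ,
    (∀ i j, M i j ≠ 0) ∧ (∀ i j, M i j / (‖M i j‖ : ℂ) = Θ i j) ∧ M.rank = r}

theorem phaseRank_lt_iff_exists_det_eq_zero {n : ℕ} (Θ : Matrix (Fin n) (Fin n) ℂ)
    (hΘ : ∀ i j, ‖Θ i j‖ = 1) :
    phaseRank Θ < n ↔
      ∃ m : Matrix (Fin n) (Fin n) ℝ, (∀ i j, 0 < m i j) ∧ (m.map (↑) ⊙ Θ).det = 0 := by
  have hphase : ∀ i j (z : ℂ), (z ≠ 0 ∧ z / ‖z‖ = Θ i j) ↔ ∃ r : ℝ, 0 < r ∧ z = r * Θ i j :=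
    fun i j _ => Complex.div_norm_eq_iff_exists_pos (hΘ i j)
  let S := {r | ∃ M : Matrix (Fin n) (Fin n) ℂ,
    (∀ i j, M i j ≠ 0) ∧ (∀ i j, M i j / (‖M i j‖ : ℂ) = Θ i j) ∧ M.rank = r}
  have hS : ∀ m : Matrix (Fin n) (Fin n) ℝ, (∀ i j, 0 < m i j) → (m.map (↑) ⊙ Θ).rank ∈ S :=
    fun m hm => ⟨_, fun i j => ((hphase i j _).2 ⟨m i j, hm i j, rfl⟩).1,
      fun i j => ((hphase i j _).2 ⟨m i j, hm i j, rfl⟩).2, rfl⟩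
  change sInf S < n ↔ _
  constructor
  · intro h
    obtain ⟨M, hM0, hMΘ, hMr⟩ := Nat.sInf_mem ⟨_, hS (of fun _ _ => 1) fun _ _ => one_pos⟩
    choose m hm hMm using fun i j => (hphase i j _).1 ⟨hM0 i j, hMΘ i j⟩
    obtain rfl : M = (of m).map (↑) ⊙ Θ := Matrix.ext hMm
    refine ⟨of m, hm, rank_lt_card_iff_det_eq_zero.1 ?_⟩
    rwa [hMr, Fintype.card_fin]
  · rintro ⟨m, hm, hdet⟩
    exact (Nat.sInf_le (hS m hm)).trans_lt (by simpa using rank_lt_card_iff_det_eq_zero.2 hdet)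

/-- A 3×3 phase matrix has phase rank less than 3 if and only if the origin lies in the
relative interior of the convex hull of the six signed monomials of the determinant. -/
theorem phaseRank_lt_three_iff_zero_mem_relint
    (Θ : Matrix (Fin 3) (Fin 3) ℂ) (hphase : ∀ i j, ‖Θ i j‖ = 1) :
    phaseRank Θ < 3 ↔
      (0 : ℂ) ∈ intrinsicInterior ℝ (convexHull ℝ
        {w : ℂ | ∃ σ : Equiv.Perm (Fin 3),
          w = ((Equiv.Perm.sign σ : ℤ) : ℂ) * ∏ i, Θ i (σ i)}) := by
  have hset : {w : ℂ | ∃ σ : Perm (Fin 3), w = ((Perm.sign σ : ℤ) : ℂ) * ∏ i, Θ i (σ i)} =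
      range fun σ : Perm (Fin 3) => ((Perm.sign σ : ℤ) : ℂ) * ∏ i, Θ i (σ i) := by
    ext
    simp [eq_comm]
  have hdet : ∀ m : Matrix (Fin 3) (Fin 3) ℝ, (m.map (↑) ⊙ Θ).det =
      ∑ σ : Perm (Fin 3), (∏ i, m i (σ i)) • (((Perm.sign σ : ℤ) : ℂ) * ∏ i, Θ i (σ i)) := by
    intro m
    simp [det_hadamard_eq_sum, Complex.real_smul]
  rw [hset, zero_mem_intrinsicInterior_convexHull_range_iff,
    phaseRank_lt_iff_exists_det_eq_zero Θ hphase]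
  simp only [hdet]
  constructor
  · rintro ⟨m, hm, h⟩
    exact ⟨_, fun σ => prod_pos fun i _ => hm i (σ i), h⟩
  · rintro ⟨w, hw, h⟩
    exact exists_pos_matrix_sum_prod_smul_eq_zero (by simp) _ hw h
end

section
/- Let Θ be an n×n phase matrix and suppose that the origin does not lie in the relative interior of the convex hull (in ℝ² ≅ ℂ) of the n! points sgn(σ)·∏_{i=1}^{n} Θ_{i,σ(i)}, σ ranging over the permutations of {1,…,n} (i.e., the determinant is colopsided at Θ). Then rank_phase(Θ) = n; in particular, every complex n×n matrix with all entries nonzero whose entrywise phases equal Θ is nonsingular. -/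
open Set Filter Topology Finset

theorem mem_intrinsicInterior_of_mem_nhdsWithin {𝕜 V P : Type*} [Ring 𝕜] [AddCommGroup V]
    [Module 𝕜 V] [TopologicalSpace P] [AddTorsor V P] {s : Set P} {x : P}
    (hx : x ∈ affineSpan 𝕜 s) (hs : s ∈ 𝓝[affineSpan 𝕜 s] x) : x ∈ intrinsicInterior 𝕜 s := by
  refine mem_intrinsicInterior.2 ⟨⟨x, hx⟩, mem_interior_iff_mem_nhds.2 ?_, rfl⟩
  rw [mem_nhds_subtype_iff_nhdsWithin]
  exact mem_of_superset (inter_mem hs self_mem_nhdsWithin) fun y ⟨hys, hyA⟩ => ⟨⟨y, hyA⟩, hys, rfl⟩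

-- Adding a multiple of the relation `∑ cᵢ wᵢ = 0` turns the weights `d` into convex ones.
theorem sum_smul_mem_convexHull_of_sum_lt_one {ι E : Type*} [Fintype ι] [Nonempty ι]
    [AddCommGroup E] [Module ℝ E] (w : ι → E) {c : ι → ℝ} (hc : ∀ i, 0 < c i)
    (hcw : ∑ i, c i • w i = 0) {d : ι → ℝ} (hd : ∀ i, 0 ≤ d i) (hdsum : ∑ i, d i < 1) :
    ∑ i, d i • w i ∈ convexHull ℝ (range w) := by
  have hcsum : 0 < ∑ i, c i := sum_pos (fun i _ => hc i) univ_nonempty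
  set t := (1 - ∑ i, d i) / ∑ i, c i
  have ht : 0 < t := div_pos (by linarith) hcsum
  have hdt : ∑ i, d i • w i = ∑ i, (d i + t * c i) • w i := by
    simp only [add_smul, mul_smul, sum_add_distrib, ← smul_sum, hcw, smul_zero, add_zero]
  rw [hdt]
  refine (convex_convexHull ℝ _).sum_mem (fun i _ => by nlinarith [hd i, hc i]) ?_
    fun i _ => subset_convexHull ℝ _ (mem_range_self i)
  rw [sum_add_distrib, ← mul_sum, div_mul_cancel₀ _ hcsum.ne']
  ring

theorem zero_mem_intrinsicInterior_convexHull_of_sum_smul_eq_zero {ι E : Type*} [Fintype ι]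
    [Nonempty ι] [NormedAddCommGroup E] [NormedSpace ℝ E] (w : ι → E) {c : ι → ℝ}
    (hc : ∀ i, 0 < c i) (hcw : ∑ i, c i • w i = 0) :
    (0 : E) ∈ intrinsicInterior ℝ (convexHull ℝ (range w)) := by
  set L := Fintype.linearCombination ℝ w
  set O : Set (ι → ℝ) := {d | (∀ i, 0 < d i) ∧ ∑ i, d i < 1}
  have hO : IsOpen O := by
    simp only [O, ofPred_and, ofPred_forall]
    exact (isOpen_iInter_of_finite fun i => isOpen_lt continuous_const (continuous_apply i)).inter
      (isOpen_lt (continuous_finsetSum _ fun i _ => continuous_apply i) continuous_const)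
  have hLO : L '' O ⊆ convexHull ℝ (range w) := by
    rintro _ ⟨d, ⟨hd, hdsum⟩, rfl⟩
    exact sum_smul_mem_convexHull_of_sum_lt_one w hc hcw (fun i => (hd i).le) hdsum
  set c₀ := (∑ i, c i + 1)⁻¹ • c
  have hc₀ : c₀ ∈ O := by
    have hpos : 0 < ∑ i, c i + 1 := by linarith [sum_pos (fun i _ => hc i) univ_nonempty]
    refine ⟨fun i => smul_pos (inv_pos.2 hpos) (hc i), ?_⟩
    simp only [c₀, Pi.smul_apply, smul_eq_mul, ← mul_sum]
    rw [inv_mul_lt_one₀ hpos]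
    linarith
  have hLc₀ : L c₀ = 0 := by
    rw [map_smul, Fintype.linearCombination_apply, hcw, smul_zero]
  have hLO_nhds : L.rangeRestrict '' O ∈ 𝓝 (0 : LinearMap.range L) :=
    (L.rangeRestrict.isOpenMap_of_finiteDimensional L.surjective_rangeRestrict O hO).mem_nhds
      ⟨c₀, hc₀, Subtype.ext hLc₀⟩
  have h0 : (0 : E) ∈ convexHull ℝ (range w) := hLc₀ ▸ hLO ⟨c₀, hc₀, rfl⟩
  refine mem_intrinsicInterior_of_mem_nhdsWithin (subset_affineSpan ℝ _ h0) ?_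
  rw [affineSpan_convexHull]
  refine nhdsWithin_mono _ affineSpan_subset_span ?_
  rw [← Fintype.range_linearCombination]
  refine mem_of_superset (mem_nhds_subtype_iff_nhdsWithin.1 hLO_nhds) ?_
  rintro _ ⟨_, ⟨d, hd, rfl⟩, rfl⟩
  exact hLO ⟨d, hd, rfl⟩

theorem Matrix.det_eq_sum_mul_of_eq_mul {n R : Type*} [Fintype n] [DecidableEq n] [CommRing R]
    {M r Θ : Matrix n n R} (h : ∀ i j, M i j = r i j * Θ i j) :
    M.det = ∑ σ : Equiv.Perm n,
      (∏ i, r i (σ i)) * ((Equiv.Perm.sign σ : ℤ) * ∏ i, Θ i (σ i)) := by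
  rw [← M.det_transpose, Matrix.det_apply]
  refine sum_congr rfl fun σ _ => ?_
  simp only [Matrix.transpose_apply, h, prod_mul_distrib, Units.smul_def, zsmul_eq_mul]
  ring

theorem Complex.eq_norm_mul_of_div_norm_eq {z θ : ℂ} (h : z / ‖z‖ = θ) : z = ‖z‖ * θ := by
  rcases eq_or_ne z 0 with rfl | hz
  · simp
  · rw [← h, mul_div_cancel₀ _ (by simpa using hz)]

theorem det_ne_zero_of_zero_notMem_intrinsicInterior {n : ℕ} {Θ : Matrix (Fin n) (Fin n) ℂ}
    (hΘ : (0 : ℂ) ∉ intrinsicInterior ℝ (convexHull ℝ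
      (range fun σ : Equiv.Perm (Fin n) => ((Equiv.Perm.sign σ : ℤ) : ℂ) * ∏ i, Θ i (σ i))))
    {M : Matrix (Fin n) (Fin n) ℂ} (hM : ∀ i j, M i j ≠ 0)
    (hMΘ : ∀ i j, M i j / (‖M i j‖ : ℂ) = Θ i j) : M.det ≠ 0 := by
  intro hdet
  refine hΘ (zero_mem_intrinsicInterior_convexHull_of_sum_smul_eq_zero _
    (c := fun σ => ∏ i, ‖M i (σ i)‖) (fun σ => prod_pos fun i _ => norm_pos_iff.2 (hM _ _)) ?_)
  rw [← hdet, Matrix.det_eq_sum_mul_of_eq_mul fun i j =>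
    Complex.eq_norm_mul_of_div_norm_eq (hMΘ i j)]
  simp only [Complex.real_smul, Complex.ofReal_prod]

theorem phaseRank_eq_of_forall_det_ne_zero {n : ℕ} {Θ : Matrix (Fin n) (Fin n) ℂ}
    (hΘ : ∀ i j, ‖Θ i j‖ = 1)
    (hdet : ∀ M : Matrix (Fin n) (Fin n) ℂ, (∀ i j, M i j ≠ 0) →
      (∀ i j, M i j / (‖M i j‖ : ℂ) = Θ i j) → M.det ≠ 0) :
    phaseRank Θ = n := by
  have hrank : ∀ M : Matrix (Fin n) (Fin n) ℂ, (∀ i j, M i j ≠ 0) →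
      (∀ i j, M i j / (‖M i j‖ : ℂ) = Θ i j) → M.rank = n := fun M hM hMΘ => by
    simpa using M.rank_of_isUnit ((M.isUnit_iff_isUnit_det).2 (hdet M hM hMΘ).isUnit)
  have hΘ₀ : ∀ i j, Θ i j ≠ 0 := fun i j h => by simpa [h] using hΘ i j
  have hΘΘ : ∀ i j, Θ i j / (‖Θ i j‖ : ℂ) = Θ i j := fun i j => by simp [hΘ i j]
  suffices h : {r | ∃ M : Matrix (Fin n) (Fin n) ℂ, (∀ i j, M i j ≠ 0) ∧
      (∀ i j, M i j / (‖M i j‖ : ℂ) = Θ i j) ∧ M.rank = r} = {n} by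
    rw [phaseRank, h, csInf_singleton]
  ext r
  constructor
  · rintro ⟨M, hM, hMΘ, rfl⟩
    exact hrank M hM hMΘ
  · rintro rfl
    exact ⟨Θ, hΘ₀, hΘΘ, hrank Θ hΘ₀ hΘΘ⟩

/-- If the determinant is colopsided at an `n × n` phase matrix `Θ`, i.e., the origin is
not in the relative interior of the convex hull of the `n!` signed determinant monomials
evaluated at `Θ`, then `Θ` has maximal phase rank `n`; in particular, every complex matrix
with nonzero entries and the same phases is nonsingular. -/
theorem phaseRank_eq_of_colopsided {n : ℕ}
    (Θ : Matrix (Fin n) (Fin n) ℂ) (hphase : ∀ i j, ‖Θ i j‖ = 1)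
    (hcolop : (0 : ℂ) ∉ intrinsicInterior ℝ (convexHull ℝ
      {w : ℂ | ∃ σ : Equiv.Perm (Fin n),
        w = ((Equiv.Perm.sign σ : ℤ) : ℂ) * ∏ i, Θ i (σ i)})) :
    phaseRank Θ = n ∧
      ∀ M : Matrix (Fin n) (Fin n) ℂ, (∀ i j, M i j ≠ 0) →
        (∀ i j, M i j / (‖M i j‖ : ℂ) = Θ i j) → M.det ≠ 0 := by
  have hmonomials : {w : ℂ | ∃ σ : Equiv.Perm (Fin n),
      w = ((Equiv.Perm.sign σ : ℤ) : ℂ) * ∏ i, Θ i (σ i)} =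
      range fun σ : Equiv.Perm (Fin n) => ((Equiv.Perm.sign σ : ℤ) : ℂ) * ∏ i, Θ i (σ i) :=
    Set.ext fun _ => exists_congr fun _ => eq_comm
  rw [hmonomials] at hcolop
  have hdet := fun M => det_ne_zero_of_zero_notMem_intrinsicInterior hcolop (M := M)
  exact ⟨phaseRank_eq_of_forall_det_ne_zero hphase hdet, hdet⟩
end

section
/- Let S be an n×m generalized sign matrix (entries in {−1,0,1}) with m ≥ n. Then sign-rank(S) = n if and only if for every vector d ∈ {−1,0,1}^n with d not identically zero, the matrix obtained by scaling row i of S by d_i has a unisigned nonzero column, i.e., a column that is not identically zero and whose entries all lie in {0,1} or all lie in {0,−1}. -/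
/-!
A realization `M` of `S` has rank `n` iff no nonzero `c` has `c ᵥ* M = 0`. If `c ᵥ* M = 0` with
`c ≠ 0`, then for `d = sign c` the entries of column `j` of `d ⊙ S` are the signs of the summands
of `∑ i, c i * M i j = 0`, so no column is unisigned and nonzero. Conversely, if `d ≠ 0` leaves no
such column, each column of `S` can be rescaled by positive weights so that its `d`-weighted sum
vanishes, which gives a realization of `S` with `d ᵥ* M = 0`, hence of rank `< n`.
-/

/-- The sign rank of a real matrix `S` (intended with entries in `{-1,0,1}`): the minimum
rank over all real matrices whose entrywise signs agree with `S`. -/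
noncomputable def signRank {n m : ℕ} (S : Matrix (Fin n) (Fin m) ℝ) : ℕ :=
  sInf {r | ∃ M : Matrix (Fin n) (Fin m) ℝ,
    (∀ i j, Real.sign (M i j) = S i j) ∧ M.rank = r}

namespace Real

theorem sign_mul (x y : ℝ) : sign (x * y) = sign x * sign y := by
  rcases lt_trichotomy x 0 with hx | rfl | hx <;> rcases lt_trichotomy y 0 with hy | rfl | hy <;>
    simp [sign_of_neg, sign_of_pos, mul_pos_of_neg_of_neg, mul_neg_of_neg_of_pos,
      mul_neg_of_pos_of_neg, *]

theorem sign_eq_self_iff {r : ℝ} : sign r = r ↔ r = -1 ∨ r = 0 ∨ r = 1 := by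
  refine ⟨fun h => h ▸ sign_apply_eq r, ?_⟩
  rintro (rfl | rfl | rfl) <;> simp [sign_of_neg, sign_zero, sign_one]

theorem sign_eq_zero_or_eq_one_iff {r : ℝ} : sign r = 0 ∨ sign r = 1 ↔ 0 ≤ r := by
  rcases lt_trichotomy r 0 with hr | rfl | hr
  · norm_num [sign_of_neg hr, hr.not_ge]
  · simp
  · simp [sign_of_pos hr, hr.le]

theorem sign_eq_zero_or_eq_neg_one_iff {r : ℝ} : sign r = 0 ∨ sign r = -1 ↔ r ≤ 0 := by
  rcases lt_trichotomy r 0 with hr | rfl | hr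
  · simp [sign_of_neg hr, hr.le]
  · simp
  · norm_num [sign_of_pos hr, hr.not_ge]

end Real

open Matrix

theorem Matrix.rank_eq_card_iff_vecMul_eq_zero {K m n : Type*} [Field K] [Fintype m] [Fintype n]
    {M : Matrix m n K} : M.rank = Fintype.card m ↔ ∀ c, c ᵥ* M = 0 → c = 0 := by
  rw [rank_eq_finrank_span_row, eq_comm, ← Set.finrank,
    ← linearIndependent_iff_card_eq_finrank_span, ← vecMul_injective_iff, ← coe_vecMulLinear,
    injective_iff_map_eq_zero]
  rfl

def IsUnisignedNonzero {ι : Type*} (x : ι → ℝ) : Prop :=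
  x ≠ 0 ∧ (0 ≤ x ∨ x ≤ 0)

section IsUnisignedNonzero

variable {ι : Type*} {x : ι → ℝ}

theorem isUnisignedNonzero_iff_sign :
    IsUnisignedNonzero x ↔ (∃ i, Real.sign (x i) ≠ 0) ∧
      ((∀ i, Real.sign (x i) = 0 ∨ Real.sign (x i) = 1) ∨
        (∀ i, Real.sign (x i) = 0 ∨ Real.sign (x i) = -1)) := by
  simp only [Real.sign_eq_zero_or_eq_one_iff, Real.sign_eq_zero_or_eq_neg_one_iff]
  simp only [IsUnisignedNonzero, Ne, funext_iff, Pi.le_def, Pi.zero_apply, not_forall,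
    Real.sign_eq_zero_iff]

theorem IsUnisignedNonzero.sum_ne_zero [Fintype ι] (hx : IsUnisignedNonzero x) :
    ∑ i, x i ≠ 0 := by
  obtain ⟨hne, hnonneg | hnonpos⟩ := hx <;> refine fun hsum => hne (funext fun i => ?_)
  · exact (Finset.sum_eq_zero_iff_of_nonneg fun i _ => hnonneg i).1 hsum i (Finset.mem_univ i)
  · exact (Finset.sum_eq_zero_iff_of_nonpos fun i _ => hnonpos i).1 hsum i (Finset.mem_univ i)

/-- Weight the positive entries by minus the sum of the others, and the others by the sum of
the positive entries. -/
theorem exists_pos_weights_sum_mul_eq_zero [Fintype ι] (hx : ¬ IsUnisignedNonzero x) :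
    ∃ w : ι → ℝ, (∀ i, 0 < w i) ∧ ∑ i, w i * x i = 0 := by
  by_cases hx0 : x = 0
  · exact ⟨1, fun _ => one_pos, by simp [hx0]⟩
  obtain ⟨hneg, hpos⟩ : (∃ i, x i < 0) ∧ ∃ i, 0 < x i := by
    simpa [IsUnisignedNonzero, hx0, Pi.le_def, not_or] using hx
  classical
  set a := ∑ i with 0 < x i, x i
  set b := ∑ i with ¬ 0 < x i, x i
  have ha : 0 < a := by
    obtain ⟨k, hk⟩ := hpos
    exact Finset.sum_pos' (fun i hi => (Finset.mem_filter.1 hi).2.le) ⟨k, by simpa, hk⟩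
  have hb : b < 0 := by
    obtain ⟨k, hk⟩ := hneg
    exact Finset.sum_neg' (fun i hi => not_lt.1 (Finset.mem_filter.1 hi).2)
      ⟨k, by simpa using hk.le, hk⟩
  refine ⟨fun i => if 0 < x i then -b else a, fun i => by beta_reduce; split_ifs <;> linarith, ?_⟩
  simp only [ite_mul, Finset.sum_ite, ← Finset.mul_sum]
  ring

end IsUnisignedNonzero

theorem exists_sign_eq_vecMul_eq_zero {ι κ : Type*} [Fintype ι] (S : Matrix ι κ ℝ) (d : ι → ℝ)
    (hS : ∀ j, ¬ IsUnisignedNonzero fun i => d i * S i j) :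
    ∃ M : Matrix ι κ ℝ, (∀ i j, Real.sign (M i j) = Real.sign (S i j)) ∧ d ᵥ* M = 0 := by
  choose w hw_pos hw_sum using fun j => exists_pos_weights_sum_mul_eq_zero (hS j)
  refine ⟨fun i j => w j i * S i j, fun i j => ?_, funext fun j => ?_⟩
  · simp [Real.sign_mul, Real.sign_of_pos (hw_pos j i)]
  · simp only [vecMul, dotProduct, Pi.zero_apply, ← hw_sum j]
    exact Finset.sum_congr rfl fun i _ => by ring

theorem signRank_eq_iff_forall_rank_eq {n m : ℕ} {S : Matrix (Fin n) (Fin m) ℝ}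
    (hS : ∀ i j, Real.sign (S i j) = S i j) :
    signRank S = n ↔ ∀ M : Matrix (Fin n) (Fin m) ℝ,
      (∀ i j, Real.sign (M i j) = S i j) → M.rank = n := by
  have hle {M : Matrix (Fin n) (Fin m) ℝ} (hM : ∀ i j, Real.sign (M i j) = S i j) :
      signRank S ≤ M.rank :=
    Nat.sInf_le ⟨M, hM, rfl⟩
  refine ⟨fun h M hM => le_antisymm M.rank_le_height (h.symm.trans_le (hle hM)),
    fun h => le_antisymm ((hle hS).trans_eq (h S hS)) ?_⟩
  exact le_csInf ⟨_, S, hS, rfl⟩ fun _ ⟨M, hM, hr⟩ => hr ▸ (h M hM).ge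

theorem signRank_eq_max_iff_unisigned_general {n m : ℕ}
    (S : Matrix (Fin n) (Fin m) ℝ)
    (hsign : ∀ i j, S i j = -1 ∨ S i j = 0 ∨ S i j = 1) :
    signRank S = n ↔
      ∀ d : Fin n → ℝ, (∀ i, d i = -1 ∨ d i = 0 ∨ d i = 1) → (∃ i, d i ≠ 0) →
        ∃ j, (∃ i, d i * S i j ≠ 0) ∧
          ((∀ i, d i * S i j = 0 ∨ d i * S i j = 1) ∨
           (∀ i, d i * S i j = 0 ∨ d i * S i j = -1)) := by
  have hS i j : Real.sign (S i j) = S i j := Real.sign_eq_self_iff.2 (hsign i j)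
  have hrank (M : Matrix (Fin n) (Fin m) ℝ) := M.rank_eq_card_iff_vecMul_eq_zero
  simp only [Fintype.card_fin] at hrank
  simp only [signRank_eq_iff_forall_rank_eq hS, hrank]
  constructor
  · intro h d hd hd0
    have hdS i j : Real.sign (d i * S i j) = d i * S i j := by
      rw [Real.sign_mul, hS, Real.sign_eq_self_iff.2 (hd i)]
    by_contra hcol
    obtain ⟨M, hM, hdM⟩ := exists_sign_eq_vecMul_eq_zero S d fun j hj =>
      hcol ⟨j, by simpa only [isUnisignedNonzero_iff_sign, hdS] using hj⟩
    obtain ⟨i, hi⟩ := hd0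
    exact hi (congrFun (h M (fun i j => (hM i j).trans (hS i j)) d hdM) i)
  · intro h M hM c hc
    by_contra hc0
    obtain ⟨j, hj⟩ := h (fun i => Real.sign (c i)) (fun i => Real.sign_apply_eq _) <| by
      simpa [funext_iff, Real.sign_eq_zero_iff] using hc0
    have hcM : IsUnisignedNonzero fun i => c i * M i j := by
      simpa only [isUnisignedNonzero_iff_sign, Real.sign_mul, hM] using hj
    exact hcM.sum_ne_zero (congrFun hc j)

/-- An `n × m` generalized sign matrix (entries in `{-1,0,1}`) with `m ≥ n` has maximal
sign rank `n` iff every scaling of its rows by scalars in `{-1,0,1}`, not all zero, leaves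
a unisigned nonzero column: a column that is not identically zero and whose scaled
entries all lie in `{0,1}` or all lie in `{0,-1}`. -/
theorem signRank_eq_max_iff_unisigned {n m : ℕ} (hnm : n ≤ m)
    (S : Matrix (Fin n) (Fin m) ℝ)
    (hsign : ∀ i j, S i j = -1 ∨ S i j = 0 ∨ S i j = 1) :
    signRank S = n ↔
      ∀ d : Fin n → ℝ, (∀ i, d i = -1 ∨ d i = 0 ∨ d i = 1) → (∃ i, d i ≠ 0) →
        ∃ j, (∃ i, d i * S i j ≠ 0) ∧
          ((∀ i, d i * S i j = 0 ∨ d i * S i j = 1) ∨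
           (∀ i, d i * S i j = 0 ∨ d i * S i j = -1)) :=
  signRank_eq_max_iff_unisigned_general S hsign
end
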